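/- arXiv:2207.05520 — 3 statements merged into one kernel-verified Lean document; each statement's English description precedes it below -/
import Mathlib

section
/- For 0 < d < 4 and ζ = d/4, the integral ∫_1^∞ dx ∫_1^∞ dy x^{−1} y^{d/4−1} (1 + y + xy)^{−d/2} is finite. -/
/-!
Since `1 + y + x y ≥ x y`, the integrand is bounded on `[1, ∞)²` by
`x ^ (-(1 + d/2)) * y ^ (-(1 + d/4))`, a product of two functions that are integrable on
`[1, ∞)` as soon as `d > 0`.
-/

open MeasureTheory Set

theorem integrableOn_Ici_rpow_of_lt {a c : ℝ} (ha : a < -1) (hc : 0 < c) :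
    IntegrableOn (fun x : ℝ => x ^ a) (Ici c) := by
  rw [integrableOn_Ici_iff_integrableOn_Ioi]
  exact integrableOn_Ioi_rpow_of_lt ha hc

theorem IntegrableOn.mul_prod {α β L : Type*} [MeasurableSpace α] [MeasurableSpace β]
    [NormedRing L] {μ : Measure α} {ν : Measure β} [SFinite μ] [SFinite ν]
    {f : α → L} {g : β → L} {s : Set α} {t : Set β}
    (hf : IntegrableOn f s μ) (hg : IntegrableOn g t ν) :
    IntegrableOn (fun p : α × β => f p.1 * g p.2) (s ×ˢ t) (μ.prod ν) := by
  rw [IntegrableOn, ← Measure.prod_restrict]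
  exact Integrable.mul_prod hf hg

theorem rpow_neg_one_add_add_mul_le {x y a : ℝ} (hx : 0 < x) (hy : 0 < y) (ha : 0 ≤ a) :
    (1 + y + x * y) ^ (-a) ≤ x ^ (-a) * y ^ (-a) := by
  rw [← Real.mul_rpow hx.le hy.le]
  exact Real.rpow_le_rpow_of_nonpos (by positivity) (by linarith) (by linarith)

theorem melon_integrand_le {x y d : ℝ} (hx : 0 < x) (hy : 0 < y) (hd : 0 ≤ d) :
    x ^ (-1 : ℝ) * y ^ (d / 4 - 1) * (1 + y + x * y) ^ (-(d / 2)) ≤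
      x ^ (-(1 + d / 2)) * y ^ (-(1 + d / 4)) :=
  calc x ^ (-1 : ℝ) * y ^ (d / 4 - 1) * (1 + y + x * y) ^ (-(d / 2))
      ≤ x ^ (-1 : ℝ) * y ^ (d / 4 - 1) * (x ^ (-(d / 2)) * y ^ (-(d / 2))) := by
        gcongr
        exact rpow_neg_one_add_add_mul_le hx hy (by linarith)
    _ = x ^ (-1 + -(d / 2)) * y ^ (d / 4 - 1 + -(d / 2)) := by
        rw [Real.rpow_add hx, Real.rpow_add hy]
        ring
    _ = x ^ (-(1 + d / 2)) * y ^ (-(1 + d / 4)) := by ring_nf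

theorem melon_mass_integral_finite_general (d : ℝ) (hd0 : 0 < d) :
    IntegrableOn
      (fun p : ℝ × ℝ =>
        p.1 ^ (-1 : ℝ) * p.2 ^ (d / 4 - 1) * (1 + p.2 + p.1 * p.2) ^ (-(d / 2)))
      (Set.Ici (1 : ℝ) ×ˢ Set.Ici (1 : ℝ)) := by
  have hbound : IntegrableOn (fun p : ℝ × ℝ => p.1 ^ (-(1 + d / 2)) * p.2 ^ (-(1 + d / 4)))
      (Ici 1 ×ˢ Ici 1) := by
    rw [Measure.volume_eq_prod]
    exact IntegrableOn.mul_prod (integrableOn_Ici_rpow_of_lt (by linarith) one_pos)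
      (integrableOn_Ici_rpow_of_lt (by linarith) one_pos)
  refine hbound.mono' (by fun_prop) ?_
  refine (ae_restrict_mem (measurableSet_Ici.prod measurableSet_Ici)).mono ?_
  rintro ⟨x, y⟩ ⟨hx, hy⟩
  have hx0 : 0 < x := zero_lt_one.trans_le hx
  have hy0 : 0 < y := zero_lt_one.trans_le hy
  rw [Real.norm_of_nonneg (by positivity)]
  exact melon_integrand_le hx0 hy0 hd0.le

/-- For 0 < d < 4 (and ζ = d/4), the integral
∫_1^∞ dx ∫_1^∞ dy x^{−1} y^{d/4−1} (1 + y + xy)^{−d/2} is finite. -/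
theorem melon_mass_integral_finite (d : ℝ) (hd0 : 0 < d) (hd4 : d < 4) :
    IntegrableOn
      (fun p : ℝ × ℝ =>
        p.1 ^ (-1 : ℝ) * p.2 ^ (d / 4 - 1) * (1 + p.2 + p.1 * p.2) ^ (-(d / 2)))
      (Set.Ici (1 : ℝ) ×ˢ Set.Ici (1 : ℝ)) :=
  melon_mass_integral_finite_general d hd0
end

section
/- Any proper one-particle-irreducible four-point subgraph of a ladder, cap, or double-cap chain graph consists of a contiguous sequence of vertical rungs connected by horizontal edges, possibly including one end of the graph (an end vertex with two external legs or an end rung with two external vertices). -/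
open scoped Classical

/-! Chain graphs (ladders U_r, caps S_r, double caps T_r). A chain graph has pieces
0,…,n (indexed by `Fin (n+1)`), each piece being either a vertical rung with two
tetrahedral vertices (`kind i = true`) or a single bare vertex (`kind i = false`);
consecutive pieces are joined by a pair of parallel horizontal edges, and the two end
pieces carry the 4 external half-edges (two at each end: on the two vertices of an end
rung, or both on an end bare vertex). -/

/-- Edges of a chain graph with pieces 0,…,n: `(true, i, s)` is one of the two parallel
vertical edges (`s` distinguishing the copy) of the rung at piece `i`; `(false, i, s)`
is one of the two parallel horizontal edges (side `s`) joining piece `i` to piece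
`i+1`. -/
abbrev ChainEdge (n : ℕ) := Bool × Fin (n + 1) × Bool

/-- The vertex of piece `i` on side `b`: a rung has two vertices `(i, true)`, `(i,
false)`; a bare vertex piece has the single vertex `(i, true)`. -/
def chainVtx {n : ℕ} (kind : Fin (n + 1) → Bool) (i : Fin (n + 1)) (b : Bool) :
    Fin (n + 1) × Bool :=
  (i, if kind i then b else true)

/-- Successor piece. -/
def nextPiece {n : ℕ} (i : Fin (n + 1)) : Fin (n + 1) :=
  if h : i.val < n then ⟨i.val + 1, Nat.succ_lt_succ h⟩ else i

/-- An edge is valid: vertical edges exist only at rung pieces, horizontal edges only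
between piece `i` and an existing piece `i+1`. -/
def validEdge {n : ℕ} (kind : Fin (n + 1) → Bool) (e : ChainEdge n) : Prop :=
  if e.1 then kind e.2.1 = true else e.2.1.val < n

/-- The edge set of the chain graph. -/
noncomputable def chainEdges {n : ℕ} (kind : Fin (n + 1) → Bool) :
    Finset (ChainEdge n) :=
  Finset.univ.filter (validEdge kind)

/-- The two endpoints of an edge. -/
def edgeEnds {n : ℕ} (kind : Fin (n + 1) → Bool) (e : ChainEdge n) :
    (Fin (n + 1) × Bool) × (Fin (n + 1) × Bool) :=
  if e.1 then ((e.2.1, true), (e.2.1, false))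
  else (chainVtx kind e.2.1 e.2.2, chainVtx kind (nextPiece e.2.1) e.2.2)

/-- The vertices incident to the edge subset `γ`. -/
noncomputable def chainVSet {n : ℕ} (kind : Fin (n + 1) → Bool)
    (γ : Finset (ChainEdge n)) : Finset (Fin (n + 1) × Bool) :=
  γ.image (fun e => (edgeEnds kind e).1) ∪ γ.image (fun e => (edgeEnds kind e).2)

/-- The number of external half-edges (legs) of the subgraph `γ`: half-edges of edges of
the graph not in `γ` attached to vertices of `γ`, plus external half-edges of the graph
(two at each end piece) attached to vertices of `γ`. -/
noncomputable def chainLegs {n : ℕ} (kind : Fin (n + 1) → Bool)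
    (γ : Finset (ChainEdge n)) : ℕ :=
  (∑ e ∈ chainEdges kind \ γ,
      ((if (edgeEnds kind e).1 ∈ chainVSet kind γ then 1 else 0)
        + (if (edgeEnds kind e).2 ∈ chainVSet kind γ then 1 else 0)))
    + (∑ b : Bool,
        ((if chainVtx kind 0 b ∈ chainVSet kind γ then 1 else 0)
          + (if chainVtx kind (Fin.last n) b ∈ chainVSet kind γ then 1 else 0)))

/-- Two edges share a vertex. -/
def sharesVertex {n : ℕ} (kind : Fin (n + 1) → Bool) (e e' : ChainEdge n) : Prop :=
  (edgeEnds kind e).1 = (edgeEnds kind e').1 ∨ (edgeEnds kind e).1 = (edgeEnds kind e').2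
    ∨ (edgeEnds kind e).2 = (edgeEnds kind e').1
    ∨ (edgeEnds kind e).2 = (edgeEnds kind e').2

/-- The edge set `γ` is connected: any two of its edges are linked by a path of edges of
`γ` consecutively sharing vertices. -/
def chainConn {n : ℕ} (kind : Fin (n + 1) → Bool) (γ : Finset (ChainEdge n)) : Prop :=
  ∀ e ∈ γ, ∀ e' ∈ γ,
    Relation.ReflTransGen (fun x y => x ∈ γ ∧ y ∈ γ ∧ sharesVertex kind x y) e e'

/-! Every vertex of a chain graph has degree four, external legs included, so a subgraph `γ`
has `4 |V(γ)| - 2 |γ|` legs. A piece meeting `V(γ)` carries at most two rung edges of `γ`,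
and carries both of its vertices as soon as it carries one, so `2 |V(γ)|` is at least the
number of rung edges plus twice the number of pieces; each horizontal edge of `γ` leaves a
piece of `γ` other than the last, at most two per piece. With four legs both estimates are
sharp: `γ` contains both horizontal edges after each of its pieces but the last, so its
pieces form an interval `[a, b]`; each rung piece of `[a, b]` then carries both vertices,
and sharpness of the first estimate forces both of its rung edges into `γ`. -/

namespace ChainGraph

variable {n : ℕ} {kind : Fin (n + 1) → Bool} {γ : Finset (ChainEdge n)}

@[simp]
lemma edgeEnds_rung (x : Fin (n + 1)) (s : Bool) :
    edgeEnds kind (true, x, s) = ((x, true), (x, false)) := rfl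

@[simp]
lemma edgeEnds_horiz (x : Fin (n + 1)) (s : Bool) :
    edgeEnds kind (false, x, s) = (chainVtx kind x s, chainVtx kind (nextPiece x) s) := rfl

lemma chainVtx_of_rung {x : Fin (n + 1)} (hk : kind x = true) (s : Bool) :
    chainVtx kind x s = (x, s) := by
  simp [chainVtx, hk]

lemma chainVtx_of_bare {x : Fin (n + 1)} (hk : kind x = false) (s : Bool) :
    chainVtx kind x s = (x, true) := by
  simp [chainVtx, hk]

lemma val_nextPiece {x : Fin (n + 1)} (hx : x.val < n) : (nextPiece x).val = x.val + 1 := by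
  simp [nextPiece, hx]

lemma nextPiece_castSucc (y : Fin n) : nextPiece y.castSucc = y.succ := by
  ext; simp [nextPiece]

/-- Every vertex has degree four once the external legs are counted. At a bare piece both
horizontal slots land on the single vertex `(x, true)`; `(x, false)` is not a vertex there,
whence the hypothesis on `f`. -/
lemma sum_edgeEnds_add_sum_external (f : Fin (n + 1) × Bool → ℕ)
    (hf : ∀ x, kind x = false → f (x, false) = 0) :
    ∑ e ∈ chainEdges kind, (f (edgeEnds kind e).1 + f (edgeEnds kind e).2)
      + ∑ b, (f (chainVtx kind 0 b) + f (chainVtx kind (Fin.last n) b))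
      = 4 * ∑ p, f p := by
  set g : Fin (n + 1) → ℕ := fun x => ∑ s, f (chainVtx kind x s)
  have hshift : ∑ y : Fin n, (g y.castSucc + g y.succ) + (g 0 + g (Fin.last n))
      = 2 * ∑ x, g x := by
    rw [Finset.sum_add_distrib, two_mul]
    nth_rw 1 [Fin.sum_univ_castSucc g]
    rw [Fin.sum_univ_succ g]
    ring
  have hlocal : ∀ x,
      (if kind x = true then 2 * (f (x, true) + f (x, false)) else 0) + 2 * g x
        = 4 * (f (x, true) + f (x, false)) := by
    intro x
    cases hk : kind x
    · simp [g, chainVtx_of_bare hk, hf x hk]; ring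
    · simp [g, chainVtx_of_rung hk]; ring
  rw [chainEdges, Finset.sum_filter]
  simp only [Fintype.sum_prod_type, Fintype.sum_bool, validEdge, if_true, Bool.false_eq_true,
    if_false, edgeEnds_rung, edgeEnds_horiz]
  have hrungs : ∀ x : Fin (n + 1),
      ((if kind x = true then f (x, true) + f (x, false) else 0)
        + if kind x = true then f (x, true) + f (x, false) else 0)
      = if kind x = true then 2 * (f (x, true) + f (x, false)) else 0 := by
    intro x; split_ifs <;> ring
  have hhoriz : ∑ x : Fin (n + 1),
      ((if x.val < n then f (chainVtx kind x true) + f (chainVtx kind (nextPiece x) true)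
          else 0)
        + if x.val < n then f (chainVtx kind x false) + f (chainVtx kind (nextPiece x) false)
          else 0)
      = ∑ y : Fin n, (g y.castSucc + g y.succ) := by
    rw [Fin.sum_univ_castSucc]
    simp only [Fin.val_castSucc, Fin.is_lt, if_true, Fin.val_last, lt_irrefl, if_false,
      nextPiece_castSucc, g, Fintype.sum_bool]
    simp only [add_zero]
    exact Finset.sum_congr rfl fun y _ => by ring
  simp only [hrungs, hhoriz]
  have hext : f (chainVtx kind 0 true) + f (chainVtx kind (Fin.last n) true)
      + (f (chainVtx kind 0 false) + f (chainVtx kind (Fin.last n) false))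
      = g 0 + g (Fin.last n) := by
    simp only [g, Fintype.sum_bool]; ring
  rw [hext, add_assoc, hshift, Finset.mul_sum, Finset.mul_sum, ← Finset.sum_add_distrib]
  exact Finset.sum_congr rfl fun x _ => hlocal x

lemma mem_chainVSet {p : Fin (n + 1) × Bool} :
    p ∈ chainVSet kind γ
      ↔ ∃ e ∈ γ, (edgeEnds kind e).1 = p ∨ (edgeEnds kind e).2 = p := by
  simp only [chainVSet, Finset.mem_union, Finset.mem_image]
  constructor
  · rintro (⟨e, he, rfl⟩ | ⟨e, he, rfl⟩)
    exacts [⟨e, he, .inl rfl⟩, ⟨e, he, .inr rfl⟩]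
  · rintro ⟨e, he, rfl | rfl⟩
    exacts [.inl ⟨e, he, rfl⟩, .inr ⟨e, he, rfl⟩]

lemma edgeEnds_mem_chainVSet {e : ChainEdge n} (he : e ∈ γ) :
    (edgeEnds kind e).1 ∈ chainVSet kind γ ∧ (edgeEnds kind e).2 ∈ chainVSet kind γ :=
  ⟨mem_chainVSet.2 ⟨e, he, .inl rfl⟩, mem_chainVSet.2 ⟨e, he, .inr rfl⟩⟩

lemma kind_of_mem_chainEdges {x : Fin (n + 1)} {s : Bool}
    (he : (true, x, s) ∈ chainEdges kind) : kind x = true := by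
  simpa [chainEdges, validEdge] using he

lemma val_lt_of_mem_chainEdges {x : Fin (n + 1)} {s : Bool}
    (he : (false, x, s) ∈ chainEdges kind) : x.val < n := by
  simpa [chainEdges, validEdge] using he

lemma kind_of_mem_chainVSet (hsub : γ ⊆ chainEdges kind) {x : Fin (n + 1)}
    (hx : (x, false) ∈ chainVSet kind γ) : kind x = true := by
  obtain ⟨⟨_ | _, y, s⟩, he, hends⟩ := mem_chainVSet.1 hx
  · have hvtx : ∀ z, chainVtx kind z s = (x, false) → kind x = true := by
      intro z hz
      simp only [chainVtx, Prod.mk.injEq] at hz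
      obtain ⟨rfl, h⟩ := hz
      by_contra hk
      simp [hk] at h
    rcases hends with h | h
    · exact hvtx _ h
    · exact hvtx _ h
  · simp only [edgeEnds_rung, Prod.ext_iff] at hends
    rcases hends with ⟨rfl, h⟩ | ⟨rfl, -⟩
    · simp at h
    · exact kind_of_mem_chainEdges (hsub he)

/-- The `4 |V(γ)|` half-edges at the vertices of `γ` are its legs and two per edge of `γ`. -/
theorem chainLegs_add_two_mul_card (hsub : γ ⊆ chainEdges kind) :
    chainLegs kind γ + 2 * γ.card = 4 * (chainVSet kind γ).card := by
  set f : Fin (n + 1) × Bool → ℕ := fun p => if p ∈ chainVSet kind γ then 1 else 0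
  have hdeg := sum_edgeEnds_add_sum_external (kind := kind) f fun x hk => if_neg fun hx =>
    Bool.false_ne_true (hk.symm.trans (kind_of_mem_chainVSet hsub hx))
  have hinternal : ∑ e ∈ γ, (f (edgeEnds kind e).1 + f (edgeEnds kind e).2) = 2 * γ.card := by
    rw [Finset.sum_congr rfl (g := fun _ => 2) fun e he => by
      simp [f, (edgeEnds_mem_chainVSet he).1, (edgeEnds_mem_chainVSet he).2],
      Finset.sum_const, smul_eq_mul, mul_comm]
  have hverts : ∑ p, f p = (chainVSet kind γ).card := by
    simp [f]
  have hlegs : chainLegs kind γ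
      = ∑ e ∈ chainEdges kind \ γ, (f (edgeEnds kind e).1 + f (edgeEnds kind e).2)
        + ∑ b, (f (chainVtx kind 0 b) + f (chainVtx kind (Fin.last n) b)) := rfl
  rw [← Finset.sum_sdiff hsub, hinternal, hverts] at hdeg
  omega

noncomputable def chainPieces (kind : Fin (n + 1) → Bool) (γ : Finset (ChainEdge n)) :
    Finset ℕ :=
  (chainVSet kind γ).image fun p => p.1.val

noncomputable def vertsAt (kind : Fin (n + 1) → Bool) (γ : Finset (ChainEdge n)) (i : ℕ) :
    Finset (Fin (n + 1) × Bool) :=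
  (chainVSet kind γ).filter fun p => p.1.val = i

noncomputable def rungEdgesAt (γ : Finset (ChainEdge n)) (i : ℕ) : Finset (ChainEdge n) :=
  γ.filter fun e => e.1 = true ∧ e.2.1.val = i

noncomputable def rungEdges (γ : Finset (ChainEdge n)) : Finset (ChainEdge n) :=
  γ.filter fun e => e.1 = true

noncomputable def horizEdges (γ : Finset (ChainEdge n)) : Finset (ChainEdge n) :=
  γ.filter fun e => e.1 = false

def horizSlot (e : ChainEdge n) : ℕ × Bool := (e.2.1.val, e.2.2)

lemma val_mem_chainPieces {p : Fin (n + 1) × Bool} (hp : p ∈ chainVSet kind γ) :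
    p.1.val ∈ chainPieces kind γ :=
  Finset.mem_image_of_mem _ hp

lemma card_vertsAt_le_two (i : ℕ) : (vertsAt kind γ i).card ≤ 2 := by
  refine (Finset.card_le_card_of_injOn Prod.snd (fun _ _ => Finset.mem_univ _) ?_).trans_eq
    (Finset.card_univ.trans Fintype.card_bool)
  intro p hp q hq hpq
  simp only [vertsAt, Finset.mem_coe, Finset.mem_filter] at hp hq
  exact Prod.ext (Fin.ext (hp.2.trans hq.2.symm)) hpq

lemma card_rungEdgesAt_le_two (i : ℕ) : (rungEdgesAt γ i).card ≤ 2 := by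
  refine (Finset.card_le_card_of_injOn (fun e => e.2.2) (fun _ _ => Finset.mem_univ _)
    ?_).trans_eq (Finset.card_univ.trans Fintype.card_bool)
  intro e he e' he' hee'
  simp only [rungEdgesAt, Finset.mem_coe, Finset.mem_filter] at he he'
  exact Prod.ext (he.2.1.trans he'.2.1.symm)
    (Prod.ext (Fin.ext (he.2.2.trans he'.2.2.symm)) hee')

lemma two_le_card_vertsAt {x : Fin (n + 1)} (hT : (x, true) ∈ chainVSet kind γ)
    (hF : (x, false) ∈ chainVSet kind γ) : 2 ≤ (vertsAt kind γ x.val).card := by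
  have hsub : {(x, true), (x, false)} ⊆ vertsAt kind γ x.val := by
    intro p hp
    simp only [Finset.mem_insert, Finset.mem_singleton] at hp
    rcases hp with rfl | rfl <;> simp [vertsAt, hT, hF]
  simpa using Finset.card_le_card hsub

lemma mem_of_card_rungEdgesAt_eq_two {x : Fin (n + 1)} (h2 : (rungEdgesAt γ x.val).card = 2)
    (s : Bool) : (true, x, s) ∈ γ := by
  by_contra hs
  have hsub : rungEdgesAt γ x.val ⊆ {(true, x, !s)} := by
    rintro ⟨t, y, s'⟩ he
    simp only [rungEdgesAt, Finset.mem_filter] at he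
    obtain ⟨he, rfl, hy⟩ := he
    obtain rfl : y = x := Fin.ext hy
    cases s <;> cases s' <;> simp_all
  have := Finset.card_le_card hsub
  simp at this
  omega

/-- A piece carries at most two vertices, and it carries both as soon as it carries a rung
edge. -/
lemma card_rungEdgesAt_add_two_le {i : ℕ} (hi : i ∈ chainPieces kind γ) :
    (rungEdgesAt γ i).card + 2 ≤ 2 * (vertsAt kind γ i).card := by
  have hpos : 0 < (vertsAt kind γ i).card := by
    obtain ⟨p, hp, rfl⟩ := Finset.mem_image.1 hi
    exact Finset.card_pos.2 ⟨p, Finset.mem_filter.2 ⟨hp, rfl⟩⟩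
  have hle := card_rungEdgesAt_le_two (γ := γ) i
  rcases Nat.eq_zero_or_pos (rungEdgesAt γ i).card with h0 | hrung
  · omega
  obtain ⟨⟨t, x, s⟩, he⟩ := Finset.card_pos.1 hrung
  simp only [rungEdgesAt, Finset.mem_filter] at he
  obtain ⟨he, rfl, rfl⟩ := he
  have hends := edgeEnds_mem_chainVSet (kind := kind) he
  rw [edgeEnds_rung] at hends
  have := two_le_card_vertsAt hends.1 hends.2
  omega

lemma edgeEnds_fst_fst (e : ChainEdge n) : (edgeEnds kind e).1.1 = e.2.1 := by
  unfold edgeEnds; split <;> rfl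

lemma val_mem_chainPieces_of_mem {e : ChainEdge n} (he : e ∈ γ) :
    e.2.1.val ∈ chainPieces kind γ := by
  simpa [edgeEnds_fst_fst] using
    val_mem_chainPieces (edgeEnds_mem_chainVSet (kind := kind) he).1

lemma succ_mem_chainPieces (hsub : γ ⊆ chainEdges kind) {x : Fin (n + 1)} {s : Bool}
    (he : (false, x, s) ∈ γ) : x.val + 1 ∈ chainPieces kind γ := by
  rw [← val_nextPiece (val_lt_of_mem_chainEdges (hsub he))]
  exact val_mem_chainPieces (edgeEnds_mem_chainVSet (kind := kind) he).2

lemma card_chainVSet_eq_sum :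
    (chainVSet kind γ).card = ∑ i ∈ chainPieces kind γ, (vertsAt kind γ i).card :=
  Finset.card_eq_sum_card_image _ _

lemma card_rungEdges_eq_sum :
    (rungEdges γ).card = ∑ i ∈ chainPieces kind γ, (rungEdgesAt γ i).card := by
  rw [rungEdges, Finset.card_eq_sum_card_fiberwise (f := fun e => e.2.1.val) fun e he =>
    val_mem_chainPieces_of_mem (kind := kind) (Finset.mem_filter.1 he).1]
  simp only [Finset.filter_filter, rungEdgesAt]

lemma card_rungEdges_add_card_horizEdges :
    (rungEdges γ).card + (horizEdges γ).card = γ.card := by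
  simpa [rungEdges, horizEdges] using
    Finset.card_filter_add_card_filter_not (s := γ) fun e => e.1 = true

lemma image_horizSlot_subset (hsub : γ ⊆ chainEdges kind)
    (hP : (chainPieces kind γ).Nonempty) :
    (horizEdges γ).image horizSlot
      ⊆ ((chainPieces kind γ).erase ((chainPieces kind γ).max' hP)) ×ˢ Finset.univ := by
  intro q hq
  obtain ⟨⟨t, x, s⟩, he, rfl⟩ := Finset.mem_image.1 hq
  obtain ⟨he, rfl⟩ := Finset.mem_filter.1 he
  have hmax := (chainPieces kind γ).le_max' _ (succ_mem_chainPieces hsub he)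
  simp only [horizSlot, Finset.mem_product, Finset.mem_erase, Finset.mem_univ, and_true]
  exact ⟨by omega, val_mem_chainPieces_of_mem he⟩

lemma card_image_horizSlot :
    ((horizEdges γ).image horizSlot).card = (horizEdges γ).card := by
  refine Finset.card_image_of_injOn ?_
  rintro ⟨t, x, s⟩ he ⟨t', x', s'⟩ he' hslot
  simp only [horizEdges, Finset.mem_coe, Finset.mem_filter] at he he'
  simp only [horizSlot, Prod.mk.injEq] at hslot
  obtain ⟨hx, rfl⟩ := hslot
  rw [he.2, he'.2, Fin.ext hx]

/-- With four legs the handshake count leaves no slack: `γ` has both horizontal edges after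
each of its pieces but the last, and equality holds in `card_rungEdgesAt_add_two_le`. -/
theorem tight_of_chainLegs_eq_four (hsub : γ ⊆ chainEdges kind) (h4 : chainLegs kind γ = 4)
    (hP : (chainPieces kind γ).Nonempty) :
    (horizEdges γ).image horizSlot
        = ((chainPieces kind γ).erase ((chainPieces kind γ).max' hP)) ×ˢ Finset.univ
      ∧ ∀ i ∈ chainPieces kind γ,
          (rungEdgesAt γ i).card + 2 = 2 * (vertsAt kind γ i).card := by
  set P := chainPieces kind γ
  have hlegs := chainLegs_add_two_mul_card hsub
  have hsplit := card_rungEdges_add_card_horizEdges (γ := γ)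
  have hV := card_chainVSet_eq_sum (kind := kind) (γ := γ)
  have hR := card_rungEdges_eq_sum (kind := kind) (γ := γ)
  have hle : ∀ i ∈ P, (rungEdgesAt γ i).card + 2 ≤ 2 * (vertsAt kind γ i).card :=
    fun i hi => card_rungEdgesAt_add_two_le hi
  have hsum : ∑ i ∈ P, ((rungEdgesAt γ i).card + 2)
      = (rungEdges γ).card + 2 * P.card := by
    rw [Finset.sum_add_distrib, Finset.sum_const, smul_eq_mul, hR, mul_comm]
  have hsum' : ∑ i ∈ P, 2 * (vertsAt kind γ i).card = 2 * (chainVSet kind γ).card := by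
    rw [← Finset.mul_sum, hV]
  have hbound := Finset.sum_le_sum hle
  have htarget :
      ((P.erase (P.max' hP)) ×ˢ (Finset.univ : Finset Bool)).card = 2 * (P.card - 1) := by
    rw [Finset.card_product, Finset.card_erase_of_mem (P.max'_mem hP), Finset.card_univ,
      Fintype.card_bool, mul_comm]
  have hH := Finset.card_le_card (image_horizSlot_subset hsub hP)
  rw [card_image_horizSlot, htarget] at hH
  have hPpos := hP.card_pos
  refine ⟨Finset.eq_of_subset_of_card_le (image_horizSlot_subset hsub hP) ?_,
    (Finset.sum_eq_sum_iff_of_le hle).1 ?_⟩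
  · rw [card_image_horizSlot, htarget]; omega
  · omega

noncomputable def chainWindow (kind : Fin (n + 1) → Bool) (a b : ℕ) : Finset (ChainEdge n) :=
  (chainEdges kind).filter fun e =>
    (e.1 = true ∧ a ≤ e.2.1.val ∧ e.2.1.val ≤ b)
      ∨ (e.1 = false ∧ a ≤ e.2.1.val ∧ e.2.1.val < b)

lemma nonempty_of_chainLegs_eq_four (h4 : chainLegs kind γ = 4) : γ.Nonempty := by
  rw [Finset.nonempty_iff_ne_empty]
  rintro rfl
  simp [chainLegs, chainVSet] at h4

lemma chainPieces_nonempty (hne : γ.Nonempty) : (chainPieces kind γ).Nonempty :=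
  let ⟨_, he⟩ := hne
  ⟨_, val_mem_chainPieces_of_mem he⟩

lemma max'_chainPieces_le (hP : (chainPieces kind γ).Nonempty) :
    (chainPieces kind γ).max' hP ≤ n := by
  obtain ⟨p, -, hp⟩ := Finset.mem_image.1 ((chainPieces kind γ).max'_mem hP)
  exact hp ▸ Nat.lt_succ_iff.1 p.1.isLt

lemma subset_chainWindow (hsub : γ ⊆ chainEdges kind) (hP : (chainPieces kind γ).Nonempty) :
    γ ⊆ chainWindow kind ((chainPieces kind γ).min' hP) ((chainPieces kind γ).max' hP) := by
  intro e he
  have hmin : (chainPieces kind γ).min' hP ≤ e.2.1.val :=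
    Finset.min'_le _ _ (val_mem_chainPieces_of_mem he)
  have hmax : e.2.1.val ≤ (chainPieces kind γ).max' hP :=
    Finset.le_max' _ _ (val_mem_chainPieces_of_mem he)
  refine Finset.mem_filter.2 ⟨hsub he, ?_⟩
  rcases e with ⟨_ | _, x, s⟩
  · have : x.val + 1 ≤ (chainPieces kind γ).max' hP :=
      Finset.le_max' _ _ (succ_mem_chainPieces hsub he)
    exact .inr ⟨rfl, hmin, by dsimp only; omega⟩
  · exact .inl ⟨rfl, hmin, hmax⟩

lemma horiz_mem_of_image_horizSlot_eq {P : Finset ℕ} {b : ℕ}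
    (himage : (horizEdges γ).image horizSlot = (P.erase b) ×ˢ Finset.univ) {x : Fin (n + 1)}
    (hx : x.val ∈ P) (hxb : x.val ≠ b) (s : Bool) : (false, x, s) ∈ γ := by
  have hslot : (x.val, s) ∈ (horizEdges γ).image horizSlot := by
    rw [himage]; simp [hx, hxb]
  obtain ⟨⟨t, y, s'⟩, he, hys⟩ := Finset.mem_image.1 hslot
  obtain ⟨he, rfl⟩ := Finset.mem_filter.1 he
  simp only [horizSlot, Prod.mk.injEq] at hys
  obtain ⟨hy, rfl⟩ := hys
  rwa [← Fin.ext hy]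

lemma Icc_subset_chainPieces (hsub : γ ⊆ chainEdges kind)
    (hP : (chainPieces kind γ).Nonempty)
    (himage : (horizEdges γ).image horizSlot
        = ((chainPieces kind γ).erase ((chainPieces kind γ).max' hP)) ×ˢ Finset.univ) :
    Finset.Icc ((chainPieces kind γ).min' hP) ((chainPieces kind γ).max' hP)
      ⊆ chainPieces kind γ := by
  have hbn := max'_chainPieces_le hP
  intro i hi
  rw [Finset.mem_Icc] at hi
  obtain ⟨hai, hib⟩ := hi
  revert hib
  induction i, hai using Nat.le_induction with
  | base => exact fun _ => (chainPieces kind γ).min'_mem hP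
  | succ r _ ih =>
    intro hrb
    have hr := ih (by omega)
    exact succ_mem_chainPieces hsub
      (horiz_mem_of_image_horizSlot_eq himage (x := ⟨r, by omega⟩) hr (by simp; omega) true)

lemma mem_chainVSet_of_rung_of_window {a b : ℕ} (hγ : γ ⊆ chainWindow kind a b)
    (hne : γ.Nonempty)
    (hhoriz : ∀ (y : Fin (n + 1)) (s : Bool), a ≤ y.val → y.val < b → (false, y, s) ∈ γ)
    {x : Fin (n + 1)} (hk : kind x = true) (hax : a ≤ x.val) (hxb : x.val ≤ b) (s : Bool) :
    (x, s) ∈ chainVSet kind γ := by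
  rcases hxb.lt_or_eq with hxb | hxb
  · simpa [chainVtx_of_rung hk] using
      (edgeEnds_mem_chainVSet (kind := kind) (hhoriz x s hax hxb)).1
  rcases hax.lt_or_eq with hax | hax
  · set y : Fin (n + 1) := ⟨x.val - 1, by omega⟩
    have hy : y.val < n := by have := x.isLt; simp [y]; omega
    have hnext : nextPiece y = x := Fin.ext (by rw [val_nextPiece hy]; simp [y]; omega)
    simpa [hnext, chainVtx_of_rung hk] using (edgeEnds_mem_chainVSet (kind := kind)
      (hhoriz y s (by simp [y]; omega) (by simp [y]; omega))).2
  -- `a = b`: every edge of `γ` is a rung edge at `x`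
  obtain ⟨e, he⟩ := hne
  have hwin := (Finset.mem_filter.1 (hγ he)).2
  rcases e with ⟨_ | _, y, t⟩
  · simp only [Bool.false_eq_true, false_and, true_and, false_or] at hwin
    omega
  · simp only [true_and, Bool.true_eq_false, false_and, or_false] at hwin
    obtain rfl : y = x := Fin.ext (by omega)
    have hends := edgeEnds_mem_chainVSet (kind := kind) he
    cases s
    exacts [hends.2, hends.1]

lemma chainWindow_subset (hsub : γ ⊆ chainEdges kind) (h4 : chainLegs kind γ = 4)
    (hP : (chainPieces kind γ).Nonempty) :
    chainWindow kind ((chainPieces kind γ).min' hP) ((chainPieces kind γ).max' hP) ⊆ γ := by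
  obtain ⟨himage, htight⟩ := tight_of_chainLegs_eq_four hsub h4 hP
  have hne := nonempty_of_chainLegs_eq_four h4
  have hγ := subset_chainWindow hsub hP
  have hIcc := Icc_subset_chainPieces hsub hP himage
  have hhoriz : ∀ (y : Fin (n + 1)) (s : Bool), (chainPieces kind γ).min' hP ≤ y.val →
      y.val < (chainPieces kind γ).max' hP → (false, y, s) ∈ γ := fun y s hay hyb =>
    horiz_mem_of_image_horizSlot_eq himage (hIcc (Finset.mem_Icc.2 ⟨hay, hyb.le⟩)) hyb.ne s
  intro e he
  obtain ⟨hE, hwin⟩ := Finset.mem_filter.1 he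
  rcases e with ⟨_ | _, x, s⟩
  · simp only [Bool.false_eq_true, false_and, true_and, false_or] at hwin
    exact hhoriz x s hwin.1 hwin.2
  · simp only [true_and, Bool.true_eq_false, false_and, or_false] at hwin
    have hk := kind_of_mem_chainEdges hE
    have hverts : (vertsAt kind γ x.val).card = 2 :=
      le_antisymm (card_vertsAt_le_two _) (two_le_card_vertsAt
        (mem_chainVSet_of_rung_of_window hγ hne hhoriz hk hwin.1 hwin.2 true)
        (mem_chainVSet_of_rung_of_window hγ hne hhoriz hk hwin.1 hwin.2 false))
    have := htight _ (hIcc (Finset.mem_Icc.2 hwin))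
    exact mem_of_card_rungEdgesAt_eq_two (by omega) s

end ChainGraph

open ChainGraph in
theorem chain_four_point_subgraph_classification_general (n : ℕ)
    (kind : Fin (n + 1) → Bool)
    (γ : Finset (ChainEdge n)) (hsub : γ ⊆ chainEdges kind)
    (h4pt : chainLegs kind γ = 4) :
    ∃ a b : ℕ, a ≤ b ∧ b ≤ n ∧
      γ = (chainEdges kind).filter (fun e =>
        (e.1 = true ∧ a ≤ e.2.1.val ∧ e.2.1.val ≤ b)
          ∨ (e.1 = false ∧ a ≤ e.2.1.val ∧ e.2.1.val < b)) := by
  have hP := chainPieces_nonempty (kind := kind) (nonempty_of_chainLegs_eq_four h4pt)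
  exact ⟨_, _, Finset.min'_le_max' _ hP, max'_chainPieces_le hP,
    (subset_chainWindow hsub hP).antisymm (chainWindow_subset hsub h4pt hP)⟩

/-- In a ladder, cap, or double cap (bare vertices occur only at the two
ends of the chain), any proper connected one-particle-irreducible four-point subgraph γ
consists of a contiguous sequence of vertical rungs connected by the horizontal edges
between them, possibly reaching one end of the graph (an end bare vertex with two
external legs, or an end rung with two external vertices): γ is exactly the set of
valid edges with vertical position in some interval [a, b] and horizontal position in
[a, b). -/
theorem chain_four_point_subgraph_classification (n : ℕ)
    (kind : Fin (n + 1) → Bool)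
    (hbare : ∀ i : Fin (n + 1), kind i = false → i.val = 0 ∨ i.val = n)
    (γ : Finset (ChainEdge n)) (hsub : γ ⊆ chainEdges kind) (hne : γ.Nonempty)
    (hproper : γ ≠ chainEdges kind)
    (hconn : chainConn kind γ)
    (h1PI : ∀ e ∈ γ, chainConn kind (γ.erase e))
    (h4pt : chainLegs kind γ = 4) :
    ∃ a b : ℕ, a ≤ b ∧ b ≤ n ∧
      γ = (chainEdges kind).filter (fun e =>
        (e.1 = true ∧ a ≤ e.2.1.val ∧ e.2.1.val ≤ b)
          ∨ (e.1 = false ∧ a ≤ e.2.1.val ∧ e.2.1.val < b)) :=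
  chain_four_point_subgraph_classification_general n kind γ hsub h4pt
end

section
/- With the same setup, R^U = ∏_{j≥1}(1 − τ_{U_j}) satisfies R^U{G·U} = G·U − (U/(1+S))·[G(• + S)], where τ_{U_j} localizes an initial ladder subgraph with j rungs and acts as τ_{U_{i₁}}τ_{S_{i₂−i₁}}⋯ producing factors U_{i₁}S_{i₂−i₁}⋯S_{i_q−i_{q−1}}[G S_{r−i_q}]. -/
/-! Each summand with `q` gaps is the `X^r`-coefficient of `U * S^q * M`, so the forest sum is
`-∑_{q ≤ r} (-1)^q [X^r] (U * S^q * M)`. Since `S` has no constant term, `S^q` does not reach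
`X^r` for `q > r`, and that alternating sum is the truncated geometric series of `(1 + S)⁻¹`. -/

open Finset PowerSeries

section

variable {R : Type*} [CommRing R]

/-- The coefficient of `X^m` in `(∑_{n ≥ 1} f n X^n)^q * ∑_n g n X^n`, written over gap vectors
as in the forest sum; `Fin N` only bounds the entries and is harmless once `m < N`. -/
def gapSum (f g : ℕ → R) (N q m : ℕ) : R :=
  ∑ d ∈ univ.filter (fun d : Fin q → Fin N => (∀ i, 1 ≤ (d i : ℕ)) ∧ ∑ i, (d i : ℕ) ≤ m),
    (∏ i, f (d i)) * g (m - ∑ i, (d i : ℕ))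

theorem gapSum_zero (f g : ℕ → R) (N m : ℕ) : gapSum f g N 0 m = g m := by
  simp [gapSum]

theorem sum_filter_add_le_eq_gapSum (f g : ℕ → R) (N q : ℕ) {a m : ℕ} (ham : a ≤ m) :
    ∑ d ∈ univ.filter (fun d : Fin q → Fin N => (∀ i, 1 ≤ (d i : ℕ)) ∧ a + ∑ i, (d i : ℕ) ≤ m),
      (∏ i, f (d i)) * g (m - a - ∑ i, (d i : ℕ)) = gapSum f g N q (m - a) :=
  sum_congr (filter_congr fun _ _ => and_congr_right fun _ => by omega) fun _ _ => rfl

theorem gapSum_succ (f g : ℕ → R) (q : ℕ) {N m : ℕ} (hm : m < N) :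
    gapSum f g N (q + 1) m = ∑ a ∈ Icc 1 m, f a * gapSum f g N q (m - a) := by
  have hIcc : ∑ a ∈ Icc 1 m, f a * gapSum f g N q (m - a) =
      ∑ a : Fin N, if (a : ℕ) ∈ Icc 1 m then f a * gapSum f g N q (m - a) else 0 := by
    rw [Fin.sum_univ_eq_sum_range (fun a => if a ∈ Icc 1 m then f a * gapSum f g N q (m - a)
      else 0), sum_ite_mem,
      inter_eq_right.mpr fun a ha => mem_range.mpr ((mem_Icc.mp ha).2.trans_lt hm)]
  rw [hIcc, gapSum, sum_filter, ← (Fin.consEquiv fun _ => Fin N).sum_comp, Fintype.sum_prod_type]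
  refine Fintype.sum_congr _ _ fun a => ?_
  simp only [Fin.consEquiv_apply, Fin.forall_fin_succ, Fin.sum_univ_succ, Fin.prod_univ_succ,
    Fin.cons_zero, Fin.cons_succ]
  split_ifs with ha
  · obtain ⟨ha1, ham⟩ := mem_Icc.mp ha
    rw [← sum_filter_add_le_eq_gapSum f g N q ham, mul_sum, sum_filter]
    simp only [ha1, true_and, mul_assoc, Nat.sub_sub]
  · refine sum_eq_zero fun d _ => if_neg fun hd => ha (mem_Icc.mpr ⟨hd.1.1, ?_⟩)
    omega

namespace PowerSeries

theorem coeff_mk_ite_mul (f : ℕ → R) (T : R⟦X⟧) (m : ℕ) :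
    coeff m ((mk fun n => if n = 0 then 0 else f n) * T) =
      ∑ a ∈ Icc 1 m, f a * coeff (m - a) T := by
  rw [coeff_mul, Nat.sum_antidiagonal_eq_sum_range_succ_mk, sum_range_succ',
    ← Ico_add_one_right_eq_Icc, sum_Ico_eq_sum_range]
  simp [add_comm]

theorem coeff_inverse_one_add_mul {S : R⟦X⟧} (hS : constantCoeff S = 0) (T : R⟦X⟧) (r : ℕ) :
    coeff r (Ring.inverse (1 + S) * T) = ∑ q ∈ range (r + 1), (-1) ^ q * coeff r (S ^ q * T) := by
  have hu : IsUnit (1 + S) := by simp [isUnit_iff_constantCoeff, hS]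
  have hgeom := mul_neg_geom_sum (-S) (r + 1)
  rw [sub_neg_eq_add] at hgeom
  have htrunc : Ring.inverse (1 + S) =
      ∑ q ∈ range (r + 1), (-S) ^ q + Ring.inverse (1 + S) * (-S) ^ (r + 1) := calc
    Ring.inverse (1 + S) = Ring.inverse (1 + S) *
        ((1 + S) * ∑ q ∈ range (r + 1), (-S) ^ q + (-S) ^ (r + 1)) := by
      rw [hgeom]; ring
    _ = _ := by rw [mul_add, ← mul_assoc, Ring.inverse_mul_cancel _ hu, one_mul]
  have hremainder : coeff r (Ring.inverse (1 + S) * (-S) ^ (r + 1) * T) = 0 := by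
    refine X_pow_dvd_iff.mp ?_ r r.lt_succ_self
    exact ((pow_dvd_pow_of_dvd (X_dvd_iff.mpr (by simp [hS])) _).mul_left _).mul_right _
  rw [htrunc, add_mul, map_add, hremainder, add_zero, sum_mul, map_sum]
  refine sum_congr rfl fun q _ => ?_
  rw [neg_pow, mul_assoc, show (-1 : R⟦X⟧) ^ q = C ((-1 : R) ^ q) by simp, coeff_C_mul]

theorem coeff_pow_mul_mk_eq_gapSum (f g : ℕ → R) (q : ℕ) {N m : ℕ} (hm : m < N) :
    coeff m ((mk fun n => if n = 0 then 0 else f n) ^ q * mk g) = gapSum f g N q m := by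
  induction q generalizing m with
  | zero => simp [gapSum_zero]
  | succ q ih =>
    rw [pow_succ', mul_assoc, coeff_mk_ite_mul, gapSum_succ f g q hm]
    exact sum_congr rfl fun a _ => by rw [ih (by omega)]

theorem coeff_mk_ite_mul_pow_mul_mk (u f g : ℕ → R) (q r : ℕ) :
    coeff r ((mk fun n => if n = 0 then 0 else u n) *
        ((mk fun n => if n = 0 then 0 else f n) ^ q * mk g))
      = ∑ e ∈ Icc 1 r, ∑ d ∈ univ.filter
          (fun d : Fin q → Fin (r + 1) => (∀ i, 1 ≤ (d i : ℕ)) ∧ e + ∑ i, (d i : ℕ) ≤ r),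
        u e * (∏ i, f (d i)) * g (r - e - ∑ i, (d i : ℕ)) := by
  rw [coeff_mk_ite_mul]
  refine sum_congr rfl fun e he => ?_
  rw [coeff_pow_mul_mk_eq_gapSum f g q (by omega : r - e < r + 1),
    ← sum_filter_add_le_eq_gapSum f g _ q (mem_Icc.mp he).2, mul_sum]
  simp only [mul_assoc]

end PowerSeries

end

/-- Resummation of R^U = ∏_{j≥1}(1 − τ_{U_j}). In R[[X]] (X standing for
g²), with U = ∑_{d≥1}X^d U_d, S = ∑_{d≥1}X^d S_d, MU r = [G U_r] (for r ≥ 1) and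
M' p = [G S_p] (M' 0 = G•), the forest sum, whose nested localizations on [G U_r] give
(−1)^q U_{i₁}S_{i₂−i₁}⋯S_{i_q−i_{q−1}}[G S_{r−i_q}] for each {i₁<…<i_q} ⊆ {1,…,r}
(written below with gap variables d₁ = i₁ ≥ 1, dⱼ = iⱼ−i_{j−1} ≥ 1), resums to
R^U{G·U} = G·U − (U/(1+S))·[G(•+S)]. -/
theorem RU_resummation {R : Type*} [CommRing R] (Uc Sc MU M' : ℕ → R) :
    (PowerSeries.mk fun r : ℕ =>
        (if r = 0 then 0 else MU r)
          + ∑ q' ∈ Finset.range (r + 1), (-1 : R) ^ (q' + 1) *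
              ∑ e ∈ Finset.Icc 1 r,
                ∑ dv ∈ Finset.univ.filter
                    (fun d : Fin q' → Fin (r + 1) =>
                      (∀ i, 1 ≤ (d i : ℕ)) ∧ e + ∑ i, (d i : ℕ) ≤ r),
                  Uc e * (∏ i, Sc (dv i : ℕ)) * M' (r - e - ∑ i, (dv i : ℕ)))
      = (PowerSeries.mk fun r : ℕ => if r = 0 then 0 else MU r)
          - Ring.inverse (1 + PowerSeries.mk fun r : ℕ => if r = 0 then 0 else Sc r)
              * (PowerSeries.mk fun r : ℕ => if r = 0 then 0 else Uc r)
              * PowerSeries.mk M' := by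
  ext r
  rw [coeff_mk, map_sub, coeff_mk, sub_eq_add_neg, mul_assoc,
    coeff_inverse_one_add_mul (by simp) _ r, ← sum_neg_distrib]
  refine congrArg _ (sum_congr rfl fun q _ => ?_)
  rw [← coeff_mk_ite_mul_pow_mul_mk, mul_left_comm]
  ring
end
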